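/- Let $c_1, c_2 > 0$ and let $x_1 = \frac{\sqrt{c_2}}{\sqrt{c_1}+\sqrt{c_2}} \cdot \frac{1}{\sqrt{2\sqrt{c_1 c_2}}}$, $x_2 = \frac{\sqrt{c_1}}{\sqrt{c_1}+\sqrt{c_2}} \cdot \frac{1}{\sqrt{2\sqrt{c_1 c_2}}}$. Then $x_2 = \frac{2 x_2 + x_1}{2(1 + c_2(x_1 + x_2)^2)}$, i.e., the Nash equilibrium is a fixed point of the LMA adjustment map. -/

import Mathlib

/-!
Writing `s₁ = √c₁`, `s₂ = √c₂`, the equilibrium is `x₁ = s₂ k`, `x₂ = s₁ k` with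
`k = 1 / ((s₁ + s₂) √(2 s₁ s₂))`, so that `(x₁ + x₂)² = 1 / (2 s₁ s₂)`. Clearing the denominator,
the fixed-point equation reduces to the first-order condition `x₁ = 2 c₂ x₂ (x₁ + x₂)²`, which
becomes `s₂ k = 2 s₂² · s₁ k / (2 s₁ s₂)`.
-/

lemma eq_adjustment_of_first_order_condition {c x₁ x₂ : ℝ} (hc : 0 ≤ c)
    (h : x₁ = 2 * c * x₂ * (x₁ + x₂) ^ 2) :
    x₂ = (2 * x₂ + x₁) / (2 * (1 + c * (x₁ + x₂) ^ 2)) := by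
  rw [eq_div_iff (by positivity)]
  linear_combination -h

lemma first_order_condition_of_proportional {s₁ s₂ k : ℝ} (hs₁ : s₁ ≠ 0) (hs₂ : s₂ ≠ 0)
    (hk : 2 * s₁ * s₂ * ((s₁ + s₂) * k) ^ 2 = 1) :
    s₂ * k = 2 * s₂ ^ 2 * (s₁ * k) * (s₂ * k + s₁ * k) ^ 2 := by
  have hsum : (s₂ * k + s₁ * k) ^ 2 = 1 / (2 * s₁ * s₂) := by
    rw [eq_div_iff (by positivity)]
    linear_combination hk
  rw [hsum]
  field_simp

theorem stmt11 (c1 c2 : ℝ) (hc1 : 0 < c1) (hc2 : 0 < c2)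
    (x1 x2 : ℝ)
    (hx1 : x1 = Real.sqrt c2 / (Real.sqrt c1 + Real.sqrt c2) *
      (1 / Real.sqrt (2 * Real.sqrt (c1 * c2))))
    (hx2 : x2 = Real.sqrt c1 / (Real.sqrt c1 + Real.sqrt c2) *
      (1 / Real.sqrt (2 * Real.sqrt (c1 * c2)))) :
    x2 = (2 * x2 + x1) / (2 * (1 + c2 * (x1 + x2) ^ 2)) := by
  set s₁ := Real.sqrt c1
  set s₂ := Real.sqrt c2
  have hs₁ : 0 < s₁ := Real.sqrt_pos.mpr hc1
  have hs₂ : 0 < s₂ := Real.sqrt_pos.mpr hc2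
  set r := Real.sqrt (2 * Real.sqrt (c1 * c2))
  have hr : 0 < r := by positivity
  have hr_sq : r ^ 2 = 2 * s₁ * s₂ := by
    rw [Real.sq_sqrt (by positivity), Real.sqrt_mul hc1.le, mul_assoc]
  have hk : 2 * s₁ * s₂ * ((s₁ + s₂) * (1 / (s₁ + s₂) * (1 / r))) ^ 2 = 1 := by
    field_simp
    exact hr_sq.symm
  have hx1k : x1 = s₂ * (1 / (s₁ + s₂) * (1 / r)) := by rw [hx1]; ring
  have hx2k : x2 = s₁ * (1 / (s₁ + s₂) * (1 / r)) := by rw [hx2]; ring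
  apply eq_adjustment_of_first_order_condition hc2.le
  rw [hx1k, hx2k, ← Real.sq_sqrt hc2.le]
  exact first_order_condition_of_proportional hs₁.ne' hs₂.ne' hk
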